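/- Let H0, H* ∈ H^stub_s(d) with E(M(H0 Δ H*)) = k+1 ≥ 5, and suppose M(H0 Δ H*) consists of exactly one minimal alternating cycle C* containing an alternating subtrail (e1, e2, e3) with e1 = {a,b}_{H0,t}, e2 = {b,c}_{H*,t}, e3 = {c,d}_{H0,s} and a ≠ d. If the hyperarc (s,{a,d}) belongs to A(H0) ∩ A(H*), then the hypergraph H̃ with A(H̃) = (A(H*) \ {M⁻¹(e2), (s,{a,d})}) ∪ {M⁻¹(e1), M⁻¹(e3)} satisfies: H̃ ∈ H^stub_s(d), E(M(H0 Δ H̃)) = k−1, and E(M(H̃ Δ H*)) = 4 ≤ k. -/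
import Mathlib


open Finset

/-!
Common setting: fix a vertex set `V` and two tail labels `τ, σ`, encoded as
`Bool` with `true = τ` and `false = σ`.  A hyperarc is a pair `(t, {a,b})`
consisting of a tail label and an unordered pair of vertices; it is degenerate
if `a = b`.  A hypergraph is a finite set of pairwise distinct non-degenerate
hyperarcs; `H^stub_s(d)` is the set of such hypergraphs realizing the degree
sequence `d` (stub degree of each vertex and number of hyperarcs per tail).
`M(H0 Δ H*)` is the edge-labeled multigraph whose edges record the hyperarcs
of the symmetric difference together with the hypergraph (`lab`, `true = H0`)
containing them and their tail.
-/

/-- Tail labels: `true = τ`, `false = σ`. -/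
abbrev Tail := Bool

/-- A hyperarc: a tail label together with an unordered pair of vertices. -/
abbrev Hyperarc (V : Type*) := Tail × Sym2 V

/-- A (stub) degree sequence: the stub degree of every vertex together with the
number of hyperarcs carrying each tail label. -/
structure DegreeSeq (V : Type*) where
  vdeg : V → ℕ
  tdeg : Tail → ℕ

/-- `A` is a hypergraph in `H^stub_s(d)`: a set of pairwise distinct (this is
automatic for a `Finset`) non-degenerate hyperarcs realizing the degree
sequence `D`. -/
def Realizes {V : Type*} [DecidableEq V] (A : Finset (Hyperarc V)) (D : DegreeSeq V) : Prop :=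
  (∀ e ∈ A, ¬ e.2.IsDiag) ∧
  (∀ v : V, (A.filter fun e => v ∈ e.2).card = D.vdeg v) ∧
  (∀ t : Tail, (A.filter fun e => e.1 = t).card = D.tdeg t)

/-- An edge `{a,b}_{X,t}` of the multigraph `M(H0 Δ H*)`: its label (`true`
means it comes from `H0`, `false` from `H*`), its tail `t` and its endpoints
`{a,b}`. -/
structure MEdge (V : Type*) where
  lab : Bool
  tail : Tail
  ends : Sym2 V
deriving DecidableEq

/-- `M⁻¹`: the hyperarc underlying an edge of `M(H0 Δ H*)`. -/
def MEdge.arc {V : Type*} (e : MEdge V) : Hyperarc V := (e.tail, e.ends)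

/-- The edge set of the edge-labeled multigraph `M(H0 Δ H*)`: every hyperarc of
`A(H0) \ A(H*)` becomes an edge labeled `H0` (i.e. `true`) and every hyperarc of
`A(H*) \ A(H0)` becomes an edge labeled `H*` (i.e. `false`). -/
def mEdges {V : Type*} [DecidableEq V] (A0 A1 : Finset (Hyperarc V)) : Finset (MEdge V) :=
  ((A0 \ A1).image fun h => ⟨true, h.1, h.2⟩) ∪
    ((A1 \ A0).image fun h => ⟨false, h.1, h.2⟩)

/-- An alternating cycle in the edge set `E` of `M(H0 Δ H*)`: a closed trail
(cyclic sequence of pairwise distinct edges, consecutive edges sharing an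
endpoint) whose edges alternate between label `H0` and label `H*`. -/
structure AltCycle {V : Type*} (E : Finset (MEdge V)) where
  /-- the length of the cycle -/
  n : ℕ
  two_le : 2 ≤ n
  /-- the cyclic sequence of edges -/
  edge : ℕ → MEdge V
  /-- the cyclic sequence of vertices visited -/
  vert : ℕ → V
  edge_periodic : ∀ i, edge (i + n) = edge i
  vert_periodic : ∀ i, vert (i + n) = vert i
  mem : ∀ i, edge i ∈ E
  inj : ∀ i < n, ∀ j < n, edge i = edge j → i = j
  ends_eq : ∀ i, (edge i).ends = s(vert i, vert (i + 1))
  alt : ∀ i, (edge i).lab = !(edge (i + 1)).lab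

/-- The set of edges used by an alternating cycle. -/
def AltCycle.edges {V : Type*} [DecidableEq V] {E : Finset (MEdge V)} (C : AltCycle E) :
    Finset (MEdge V) :=
  (Finset.range C.n).image C.edge

/-- A minimal alternating cycle: one containing no proper alternating subcycle. -/
def AltCycle.Minimal {V : Type*} [DecidableEq V] {E : Finset (MEdge V)} (C : AltCycle E) : Prop :=
  ∀ C' : AltCycle E, C'.edges ⊆ C.edges → C'.edges = C.edges

/-- `|f_{X,t}(M(H0 Δ H*))|`: the number of edges of `M(H0 Δ H*)` labeled with
hypergraph `l` (`true = H0`) and tail `t`. -/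
def labTailCount {V : Type*} [DecidableEq V] (A0 A1 : Finset (Hyperarc V))
    (l : Bool) (t : Tail) : ℕ :=
  ((mEdges A0 A1).filter fun e => e.lab = l ∧ e.tail = t).card

/-- `H` and `H'` differ by a single hypershuffle move, i.e. they are adjacent in
`G(H^stub_s(d))`: their symmetric difference consists of 4 hyperarcs,
`M(H Δ H')` is an alternating cycle, and the number of tail-τ edges labeled `H`
equals the number of tail-τ edges labeled `H'`. -/
def HypershuffleAdj {V : Type*} [DecidableEq V] (A0 A1 : Finset (Hyperarc V)) : Prop :=
  ((A0 \ A1) ∪ (A1 \ A0)).card = 4 ∧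
  (∃ C : AltCycle (mEdges A0 A1), C.edges = mEdges A0 A1) ∧
  labTailCount A0 A1 true true = labTailCount A0 A1 false true

section AuxLemmas

lemma swap_filter_card {α : Type*} [DecidableEq α] (A R S : Finset α) (hR : R ⊆ A)
    (hS : Disjoint S A) (P : α → Prop) [DecidablePred P]
    (h : (R.filter P).card = (S.filter P).card) :
    (((A \ R) ∪ S).filter P).card = (A.filter P).card := by
  have hsd : (A \ R).filter P = A.filter P \ R.filter P := by
    ext x; simp only [mem_filter, mem_sdiff]; tauto
  rw [filter_union, card_union_of_disjoint (by
    exact disjoint_left.mpr fun x hx hx2 =>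
      (disjoint_right.mp hS (mem_sdiff.mp (mem_of_mem_filter x hx)).1)
        (mem_of_mem_filter x hx2)), hsd, card_sdiff_of_subset (filter_subset_filter _ hR)]
  have := card_le_card (filter_subset_filter P hR)
  omega

lemma pair_filter_card {α : Type*} [DecidableEq α] (x y : α) (hxy : x ≠ y)
    (P : α → Prop) [DecidablePred P] :
    (({x, y} : Finset α).filter P).card = (if P x then 1 else 0) + (if P y then 1 else 0) := by
  rw [Finset.card_filter, Finset.sum_pair hxy]

lemma mem_mEdges {V : Type*} [DecidableEq V] (A0 A1 : Finset (Hyperarc V)) (e : MEdge V) :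
    e ∈ mEdges A0 A1 ↔
      (e.lab = true ∧ (e.tail, e.ends) ∈ A0 \ A1) ∨
      (e.lab = false ∧ (e.tail, e.ends) ∈ A1 \ A0) := by
  simp only [mEdges, mem_union, mem_image, mem_sdiff]
  constructor
  · rintro (⟨x, hx, rfl⟩ | ⟨x, hx, rfl⟩) <;> simp_all
  · rintro (⟨h, hx⟩ | ⟨h, hx⟩)
    · exact Or.inl ⟨(e.tail, e.ends), hx, by cases e; simp_all⟩
    · exact Or.inr ⟨(e.tail, e.ends), hx, by cases e; simp_all⟩

lemma card_mEdges {V : Type*} [DecidableEq V] (A0 A1 : Finset (Hyperarc V)) :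
    (mEdges A0 A1).card = (A0 \ A1).card + (A1 \ A0).card := by
  have hinj : ∀ l : Bool, Function.Injective (fun h : Hyperarc V => (⟨l, h.1, h.2⟩ : MEdge V)) :=
    fun l x y h => by
      obtain ⟨x1, x2⟩ := x; obtain ⟨y1, y2⟩ := y
      simpa [MEdge.mk.injEq] using h
  rw [mEdges, card_union_of_disjoint, card_image_of_injective _ (hinj true),
    card_image_of_injective _ (hinj false)]
  rw [disjoint_left]
  rintro e he hf
  simp only [mem_image] at he hf
  obtain ⟨x, _, rfl⟩ := he
  obtain ⟨y, _, h⟩ := hf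
  simp [MEdge.mk.injEq] at h

lemma key_count {α : Type*} [DecidableEq α] (a b c d v : α)
    (hab : a ≠ b) (hbc : b ≠ c) (hcd : c ≠ d) (had : a ≠ d) :
    ((if v = b ∨ v = c then 1 else 0) + (if v = a ∨ v = d then 1 else 0) : ℕ) =
    (if v = a ∨ v = b then 1 else 0) + (if v = c ∨ v = d then 1 else 0) := by
  by_cases hva : v = a <;> by_cases hvb : v = b <;> by_cases hvc : v = c <;>
    by_cases hvd : v = d <;> simp_all

end AuxLemmas

/-- Case 1 of the proof of Lemma `connected_when_one_cycle`.
`M(H0 Δ H*)` has `k + 1 ≥ 5` edges and is exactly one minimal alternating cycle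
`C*` with subtrail `(e1, e2, e3)`, `e1 = {a,b}_{H0,t}`, `e2 = {b,c}_{H*,t}`,
`e3 = {c,d}_{H0,s}`, `a ≠ d`.  If `(s,{a,d}) ∈ A(H0) ∩ A(H*)`, then
`H̃` with `A(H̃) = (A(H*) \ {M⁻¹(e2), (s,{a,d})}) ∪ {M⁻¹(e1), M⁻¹(e3)}`
satisfies `H̃ ∈ H^stub_s(d)`, `E(M(H0 Δ H̃)) = k − 1` and
`E(M(H̃ Δ H*)) = 4 ≤ k`. -/
theorem one_cycle_case1 {V : Type*} [DecidableEq V]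
    (D : DegreeSeq V) (A0 A1 : Finset (Hyperarc V))
    (h0 : Realizes A0 D) (h1 : Realizes A1 D) (k : ℕ)
    (hcard : (mEdges A0 A1).card = k + 1) (hk : 5 ≤ k + 1)
    (C : AltCycle (mEdges A0 A1)) (hmin : C.Minimal) (hall : C.edges = mEdges A0 A1)
    (a b c d : V) (t s : Tail) (i : ℕ)
    (he1 : C.edge i = ⟨true, t, s(a, b)⟩)
    (he2 : C.edge (i + 1) = ⟨false, t, s(b, c)⟩)
    (he3 : C.edge (i + 2) = ⟨true, s, s(c, d)⟩)
    (had : a ≠ d)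
    (he4 : (s, s(a, d)) ∈ A0 ∩ A1)
    (At : Finset (Hyperarc V))
    (hAt : At = (A1 \ {(t, s(b, c)), (s, s(a, d))}) ∪ {(t, s(a, b)), (s, s(c, d))}) :
    Realizes At D ∧ (mEdges A0 At).card = k - 1 ∧ (mEdges At A1).card = 4 ∧ 4 ≤ k := by

  -- notation for the four relevant hyperarcs
  set e1a : Hyperarc V := (t, s(a, b)) with he1a
  set e2a : Hyperarc V := (t, s(b, c)) with he2a
  set e3a : Hyperarc V := (s, s(c, d)) with he3a
  set e4a : Hyperarc V := (s, s(a, d)) with he4a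
  -- membership facts
  have m1 : e1a ∈ A0 \ A1 := by
    have := C.mem i; rw [he1, mem_mEdges] at this; simpa using this
  have m2 : e2a ∈ A1 \ A0 := by
    have := C.mem (i + 1); rw [he2, mem_mEdges] at this; simpa using this
  have m3 : e3a ∈ A0 \ A1 := by
    have := C.mem (i + 2); rw [he3, mem_mEdges] at this; simpa using this
  rw [mem_sdiff] at m1 m2 m3
  rw [mem_inter] at he4
  -- distinctness facts
  have hne13 : e1a ≠ e3a := by
    intro h
    rw [he1a, he3a, Prod.mk.injEq, Sym2.eq_iff] at h
    obtain ⟨hts, (⟨hac, hbd⟩ | ⟨hadq, _⟩)⟩ := h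
    · have h2 : e2a = e1a := by
        rw [he2a, he1a, Prod.mk.injEq]
        exact ⟨rfl, by rw [← hac]; exact Sym2.eq_swap.symm⟩
      exact m1.2 (h2 ▸ m2.1)
    · exact had hadq
  have hne24 : e2a ≠ e4a := fun h => m2.2 (h ▸ he4.1)
  have hne41 : e4a ≠ e1a := fun h => m1.2 (h ▸ he4.2)
  have hne43 : e4a ≠ e3a := fun h => m3.2 (h ▸ he4.2)
  -- the removed / added pairs
  set R : Finset (Hyperarc V) := {e2a, e4a} with hR
  set S : Finset (Hyperarc V) := {e1a, e3a} with hS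
  have hAt' : At = (A1 \ R) ∪ S := hAt
  have hRsub : R ⊆ A1 := by
    rw [hR, insert_subset_iff, singleton_subset_iff]
    exact ⟨m2.1, he4.2⟩
  have hSdisj : Disjoint S A1 := by
    rw [hS, disjoint_left]
    intro x hx
    rcases mem_insert.mp hx with rfl | hx
    · exact m1.2
    · rw [mem_singleton] at hx; subst hx; exact m3.2
  have hcardR : R.card = 2 := card_pair hne24
  have hcardS : S.card = 2 := card_pair hne13
  -- symmetric differences
  have hAtA1 : At \ A1 = S := by
    rw [hAt']
    ext x
    simp only [mem_sdiff, mem_union]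
    constructor
    · rintro ⟨(⟨hx, _⟩ | hx), hn⟩
      · exact absurd hx hn
      · exact hx
    · intro hx
      exact ⟨Or.inr hx, disjoint_left.mp hSdisj hx⟩
  have hA1At : A1 \ At = R := by
    rw [hAt']
    ext x
    simp only [mem_sdiff, mem_union, not_or, not_and, not_not]
    constructor
    · rintro ⟨hx, himp, _⟩
      exact himp hx
    · intro hx
      exact ⟨hRsub hx, fun _ => hx, disjoint_right.mp hSdisj (hRsub hx)⟩
  have hAtA0 : At \ A0 = (A1 \ A0) \ {e2a} := by
    rw [hAt']
    ext x
    simp only [mem_sdiff, mem_union, hR, hS, mem_insert, mem_singleton, not_or]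
    constructor
    · rintro ⟨(⟨hx1, hxR⟩ | hx), hx0⟩
      · exact ⟨⟨hx1, hx0⟩, hxR.1⟩
      · rcases hx with rfl | rfl
        · exact absurd m1.1 hx0
        · exact absurd m3.1 hx0
    · rintro ⟨⟨hx1, hx0⟩, hx2⟩
      refine ⟨Or.inl ⟨hx1, hx2, ?_⟩, hx0⟩
      rintro rfl
      exact hx0 he4.1
  have hA0At : A0 \ At = ((A0 \ A1) \ S) ∪ {e4a} := by
    rw [hAt']
    ext x
    simp only [mem_sdiff, mem_union, mem_singleton, not_or, not_and, not_not]
    constructor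
    · rintro ⟨hx0, hmem, hxS⟩
      by_cases hx1 : x ∈ A1
      · have hxR := hmem hx1
        rw [hR, mem_insert, mem_singleton] at hxR
        rcases hxR with rfl | rfl
        · exact absurd hx0 m2.2
        · exact Or.inr rfl
      · exact Or.inl ⟨⟨hx0, hx1⟩, hxS⟩
    · rintro (⟨⟨hx0, hx1⟩, hxS⟩ | rfl)
      · exact ⟨hx0, fun h => absurd h hx1, hxS⟩
      · refine ⟨he4.1, fun _ => ?_, disjoint_right.mp hSdisj he4.2⟩
        rw [hR]; exact mem_insert_of_mem (mem_singleton_self _)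
  -- cardinalities
  have hSsub : S ⊆ A0 \ A1 := by
    rw [hS, insert_subset_iff, singleton_subset_iff, mem_sdiff, mem_sdiff]
    exact ⟨⟨m1.1, m1.2⟩, ⟨m3.1, m3.2⟩⟩
  have hcard01 : (A0 \ A1).card + (A1 \ A0).card = k + 1 := by
    rw [← card_mEdges]; exact hcard
  have hle2 : 2 ≤ (A0 \ A1).card := hcardS ▸ card_le_card hSsub
  have hle1 : 1 ≤ (A1 \ A0).card :=
    Nat.one_le_iff_ne_zero.mpr (Nat.pos_iff_ne_zero.mp
      (card_pos.mpr ⟨e2a, mem_sdiff.mpr m2⟩))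
  have hcA0At : (A0 \ At).card = (A0 \ A1).card - 2 + 1 := by
    rw [hA0At, card_union_of_disjoint, card_sdiff_of_subset hSsub, hcardS, card_singleton]
    rw [disjoint_left]
    rintro x hx hx'
    rw [mem_singleton] at hx'
    subst hx'
    exact (mem_sdiff.mp (mem_sdiff.mp hx).1).2 he4.2
  have hcAtA0 : (At \ A0).card = (A1 \ A0).card - 1 := by
    rw [hAtA0, card_sdiff_of_subset (by rw [singleton_subset_iff]; exact mem_sdiff.mpr m2),
      card_singleton]
  -- the two cardinality claims
  have claim2 : (mEdges A0 At).card = k - 1 := by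
    rw [card_mEdges, hcA0At, hcAtA0]
    omega
  have claim3 : (mEdges At A1).card = 4 := by
    rw [card_mEdges, hAtA1, hA1At, hcardR, hcardS]
  -- the realizability claim
  have claim1 : Realizes At D := by
    refine ⟨?_, ?_, ?_⟩
    · intro e he
      rw [hAt', mem_union] at he
      rcases he with he | he
      · exact h1.1 e (mem_sdiff.mp he).1
      · rw [hS, mem_insert, mem_singleton] at he
        rcases he with rfl | rfl
        · exact h0.1 _ m1.1
        · exact h0.1 _ m3.1
    · intro v
      rw [hAt', swap_filter_card A1 R S hRsub hSdisj]
      · exact h1.2.1 v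
      · rw [hR, hS, pair_filter_card _ _ hne24, pair_filter_card _ _ hne13]
        have hab : a ≠ b := by
          have := h0.1 _ m1.1; rw [he1a] at this; simpa [Sym2.mk_isDiag_iff] using this
        have hbc : b ≠ c := by
          have := h1.1 _ m2.1; rw [he2a] at this; simpa [Sym2.mk_isDiag_iff] using this
        have hcd : c ≠ d := by
          have := h0.1 _ m3.1; rw [he3a] at this; simpa [Sym2.mk_isDiag_iff] using this
        simp only [he1a, he2a, he3a, he4a, Sym2.mem_iff]
        exact key_count a b c d v hab hbc hcd had
    · intro u
      rw [hAt', swap_filter_card A1 R S hRsub hSdisj]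
      · exact h1.2.2 u
      · rw [hR, hS, pair_filter_card _ _ hne24, pair_filter_card _ _ hne13]
  exact ⟨claim1, claim2, claim3, by omega⟩
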